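/- arXiv:math/0401068 — 5 statements merged into one kernel-verified Lean document; each statement's English description precedes it below -/
import Mathlib

section
/- Assume relation (7), i.e. m^2*(y^2 + 1) = y*a. Then for every integer p ≥ 1, H_p = y^p * h(p). -/
open Finset

/-!
With `c = a / m²`, relation (7) reads `y c = y² + 1`, so `g p = y^p h(p)` satisfies
`g (p+2) = (y² + 1) g (p+1) - y² g p`. Its differences therefore form a geometric sequence
of ratio `y²` starting from `g 1 - g 0 = y b / m² - 1`, and summing them gives
`g p = 1 + (y b / m² - 1) ∑_{i<p} y^(2i)`, which is `H_p` once `∑_{i=1}^{p-1} y^(2i)` is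
written as `∑_{i<p} y^(2i) - 1`.
-/

section

variable {R : Type*} [CommRing R]

theorem sub_succ_eq_pow_mul_of_sub_succ_succ {g : ℕ → R} {r : R}
    (hg : ∀ n, g (n + 2) - g (n + 1) = r * (g (n + 1) - g n)) (n : ℕ) :
    g (n + 1) - g n = r ^ n * (g 1 - g 0) := by
  induction n with
  | zero => ring
  | succ n ih => rw [hg, ih]; ring

theorem eq_add_mul_geom_sum_of_sub_succ_succ {g : ℕ → R} {r : R}
    (hg : ∀ n, g (n + 2) - g (n + 1) = r * (g (n + 1) - g n)) (n : ℕ) :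
    g n = g 0 + (g 1 - g 0) * ∑ i ∈ range n, r ^ i := by
  have hsum := Finset.sum_range_sub g n
  rw [Finset.sum_congr rfl fun i _ => sub_succ_eq_pow_mul_of_sub_succ_succ hg i,
    ← Finset.sum_mul] at hsum
  linear_combination -hsum

theorem pow_mul_sub_succ_succ_of_linear_rec {h : ℤ → R} {c y : R}
    (hrec : ∀ p : ℤ, h p = c * h (p - 1) - h (p - 2)) (hy : y * c = y ^ 2 + 1) (n : ℕ) :
    y ^ (n + 2) * h ↑(n + 2) - y ^ (n + 1) * h ↑(n + 1) =
      y ^ 2 * (y ^ (n + 1) * h ↑(n + 1) - y ^ n * h n) := by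
  have hn := hrec (n + 2)
  rw [show (n + 2 : ℤ) - 1 = ↑(n + 1) by push_cast; ring, show (n + 2 : ℤ) - 2 = n by ring] at hn
  push_cast at hn ⊢
  rw [hn]
  linear_combination y ^ (n + 1) * h (n + 1) * hy

end

theorem stmt_5_general {K : Type*} [Field K] (m y : K) (hm : m ≠ 0)
    (a b : K)
    (h : ℤ → K) (h0 : h 0 = 1) (h1 : h 1 = b / m ^ 2)
    (hrec : ∀ p : ℤ, h p = (a / m ^ 2) * h (p - 1) - h (p - 2))
    (h7 : m ^ 2 * (y ^ 2 + 1) = y * a) :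
    ∀ p : ℕ, 1 ≤ p →
      (y * b / m ^ 2) * (∑ i ∈ Finset.range p, y ^ (2 * i)) -
        (∑ i ∈ Finset.Ico 1 p, y ^ (2 * i)) = y ^ p * h p := by
  intro p hp
  have hy : y * (a / m ^ 2) = y ^ 2 + 1 := by
    field_simp
    linear_combination -h7
  have hg := eq_add_mul_geom_sum_of_sub_succ_succ
    (g := fun n : ℕ => y ^ n * h n) (pow_mul_sub_succ_succ_of_linear_rec hrec hy) p
  simp only [Nat.cast_zero, Nat.cast_one, h0, h1, pow_zero, pow_one] at hg
  have hIco : ∑ i ∈ Finset.Ico 1 p, y ^ (2 * i) = ∑ i ∈ Finset.range p, y ^ (2 * i) - 1 := by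
    rw [Finset.sum_range_eq_add_Ico _ hp]
    ring
  rw [hg, hIco]
  simp only [pow_mul]
  ring

/-- Lemma 3.2 of the paper: assuming relation (7), for every integer `p ≥ 1` one has
`H_p = y^p * h(p)`, where `h` is the sequence of Lemma 3.2 and
`H_p = (y b / m²) ∑_{i=0}^{p-1} y^(2i) - ∑_{i=1}^{p-1} y^(2i)`. -/
theorem stmt_5 {K : Type*} [Field K] (m x y : K) (hm : m ≠ 0)
    (a b : K)
    (ha : a = m ^ 4 - x * m ^ 4 + x ^ 2 * m ^ 2 + m ^ 2 + 1 - x)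
    (hb : b = m ^ 4 - x * m ^ 2 + 1)
    (h : ℤ → K) (h0 : h 0 = 1) (h1 : h 1 = b / m ^ 2)
    (hrec : ∀ p : ℤ, h p = (a / m ^ 2) * h (p - 1) - h (p - 2))
    (h7 : m ^ 2 * (y ^ 2 + 1) = y * a) :
    ∀ p : ℕ, 1 ≤ p →
      (y * b / m ^ 2) * (∑ i ∈ Finset.range p, y ^ (2 * i)) -
        (∑ i ∈ Finset.Ico 1 p, y ^ (2 * i)) = y ^ p * h p :=
  stmt_5_general m y hm a b h h0 h1 hrec h7
end

section
/- Assume relation (7), i.e. m^2*(y^2 + 1) = y*a. Then for every integer p ≥ 1, y^(2p+1) + 1 - x*y^(2p) - x*y = (y + 1)*(1 - x)*H_p. -/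
open Finset

/-!
Put `D = y b / m²` and `S = ∑_{i<p} y^(2i)`, so that `H_p = D S - (S - 1)`. Since
`y a = (1 - x) y b + (1 + x) y m²`, relation (7) divided by `m²` reads
`(1 - x) D = y² + 1 - (1 + x) y = (y - 1)(y - x) + (1 - x)`. Substituting this, the right-hand side
becomes `(y - x)(y² - 1) S + (y + 1)(1 - x)`, and the geometric sum `(y² - 1) S = y^(2p) - 1`
turns it into the left-hand side.
-/

theorem mul_sum_range_pow_two_mul {R : Type*} [CommRing R] (y : R) (p : ℕ) :
    (y ^ 2 - 1) * ∑ i ∈ range p, y ^ (2 * i) = y ^ (2 * p) - 1 := by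
  simpa only [pow_mul] using mul_geom_sum (y ^ 2) p

theorem pow_two_mul_add_one_sub_eq_of_one_sub_mul_eq {R : Type*} [CommRing R] {x y D : R}
    (hD : (1 - x) * D = y ^ 2 + 1 - (1 + x) * y) {p : ℕ} (hp : 1 ≤ p) :
    y ^ (2 * p + 1) + 1 - x * y ^ (2 * p) - x * y =
      (y + 1) * (1 - x) * (D * ∑ i ∈ range p, y ^ (2 * i) - ∑ i ∈ Ico 1 p, y ^ (2 * i)) := by
  rw [sum_Ico_eq_sub _ hp, sum_range_one, pow_succ]
  linear_combination (-(y + 1) * ∑ i ∈ range p, y ^ (2 * i)) * hD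
    - (y - x) * mul_sum_range_pow_two_mul y p

/-- Equation (9) of the paper: assuming relation (7), for every integer `p ≥ 1`,
`y^(2p+1) + 1 - x y^(2p) - x y = (y + 1)(1 - x) H_p`. -/
theorem stmt_6 {K : Type*} [Field K] (m x y : K) (hm : m ≠ 0)
    (a b : K)
    (ha : a = m ^ 4 - x * m ^ 4 + x ^ 2 * m ^ 2 + m ^ 2 + 1 - x)
    (hb : b = m ^ 4 - x * m ^ 2 + 1)
    (h7 : m ^ 2 * (y ^ 2 + 1) = y * a) :
    ∀ p : ℕ, 1 ≤ p →
      y ^ (2 * p + 1) + 1 - x * y ^ (2 * p) - x * y =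
        (y + 1) * (1 - x) *
          ((y * b / m ^ 2) * (∑ i ∈ Finset.range p, y ^ (2 * i)) -
            (∑ i ∈ Finset.Ico 1 p, y ^ (2 * i))) := by
  intro p hp
  have h7_div : (1 - x) * (y * b / m ^ 2) = y ^ 2 + 1 - (1 + x) * y := by
    subst ha hb
    field_simp
    linear_combination -h7
  exact pow_two_mul_add_one_sub_eq_of_one_sub_mul_eq h7_div hp
end

section
/- Let p ≥ 1 be an integer. Assume relation (7), i.e. m^2*(y^2 + 1) = y*a, and assume y^(2p+1) + 1 - x*y^(2p) - x*y = 0. Then (y + 1)*(1 - x)*y^p*h(p) = 0. -/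
/-- The displayed conclusion `(y+1)(1-x) y^p h_p(m,x) = 0` of Theorem 2.2:
assuming relation (7) and equation (8), one gets `(y+1)(1-x) y^p h(p) = 0`. -/
theorem stmt_7 {K : Type*} [Field K] (m x y : K) (hm : m ≠ 0)
    (a b : K)
    (ha : a = m ^ 4 - x * m ^ 4 + x ^ 2 * m ^ 2 + m ^ 2 + 1 - x)
    (hb : b = m ^ 4 - x * m ^ 2 + 1)
    (h : ℤ → K) (h0 : h 0 = 1) (h1 : h 1 = b / m ^ 2)
    (hrec : ∀ q : ℤ, h q = (a / m ^ 2) * h (q - 1) - h (q - 2))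
    (p : ℤ) (hp : 1 ≤ p)
    (h7 : m ^ 2 * (y ^ 2 + 1) = y * a)
    (h8 : y ^ (2 * p + 1) + 1 - x * y ^ (2 * p) - x * y = 0) :
    (y + 1) * (1 - x) * y ^ p * h p = 0 := by
  subst ha hb
  by_cases hy0 : y = 0
  · rw [hy0, zero_zpow p (by omega)]; ring
  by_cases hx1 : (1 : K) - x = 0
  · rw [hx1]; ring
  by_cases hy1 : y + 1 = 0
  · rw [hy1]; ring
  have hm2 : (m : K) ^ 2 ≠ 0 := pow_ne_zero _ hm
  have hym1 : y - 1 ≠ 0 := by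
    intro hy
    have hy' : y = 1 := sub_eq_zero.mp hy
    rw [hy', one_zpow, one_zpow] at h8
    have h2x : (2 : K) * (1 - x) = 0 := by linear_combination h8
    have h2 : (2 : K) = 0 := by
      rcases mul_eq_zero.mp h2x with h' | h'
      · exact h'
      · exact absurd h' hx1
    exact hy1 (by rw [hy']; linear_combination h2)
  have hy2 : y ^ 2 - 1 ≠ 0 := by
    intro hsq
    have : (y - 1) * (y + 1) = 0 := by linear_combination hsq
    rcases mul_eq_zero.mp this with h' | h'
    · exact hym1 h'
    · exact hy1 h'
  have hinv : y * y⁻¹ = 1 := mul_inv_cancel₀ hy0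
  set A : K := ((m ^ 4 - x * m ^ 2 + 1) * y - m ^ 2) / (m ^ 2 * (y ^ 2 - 1)) with hA
  set B : K := 1 - A with hB
  set f : ℤ → K := fun q => A * y ^ q + B * y ^ (-q) with hf
  have hs : (m ^ 4 - x * m ^ 4 + x ^ 2 * m ^ 2 + m ^ 2 + 1 - x) / m ^ 2 = y + y⁻¹ := by
    field_simp
    linear_combination -h7
  have hstep : ∀ r : ℤ, A * y ^ (r + 2) + B * y ^ (-(r + 2)) =
      (y + y⁻¹) * (A * y ^ (r + 1) + B * y ^ (-(r + 1))) - (A * y ^ r + B * y ^ (-r)) := by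
    intro r
    have e1 : y ^ (r + 1) = y ^ r * y := zpow_add_one₀ hy0 r
    have e2 : y ^ (r + 2) = y ^ (r + 1) * y := by
      rw [show r + 2 = (r + 1) + 1 by ring, zpow_add_one₀ hy0]
    have e3 : y ^ (-(r + 1)) = y ^ (-r) * y⁻¹ := by
      rw [show -(r + 1) = -r + (-1) by ring, zpow_add₀ hy0, zpow_neg_one]
    have e4 : y ^ (-(r + 2)) = y ^ (-(r + 1)) * y⁻¹ := by
      rw [show -(r + 2) = -(r + 1) + (-1) by ring, zpow_add₀ hy0, zpow_neg_one]
    rw [e2, e4, e3, e1]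
    linear_combination (-(A * y ^ r) - B * y ^ (-r)) * hinv
  have key : ∀ n : ℕ, h n = f n ∧ h ((n : ℤ) + 1) = f ((n : ℤ) + 1) := by
    intro n
    induction n with
    | zero =>
      constructor
      · show h 0 = f 0
        rw [h0, hf]
        simp [hB]
      · show h 1 = f 1
        rw [h1, hf]
        simp only [zpow_one]
        rw [zpow_neg_one, hB, hA]
        field_simp
        ring
    | succ n ih =>
      have hcast : ((n + 1 : ℕ) : ℤ) = (n : ℤ) + 1 := by push_cast; ring
      constructor
      · rw [hcast]; exact ih.2
      · rw [hcast]
        have hr := hrec ((n : ℤ) + 2)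
        rw [show (n : ℤ) + 2 - 1 = (n : ℤ) + 1 by ring,
          show (n : ℤ) + 2 - 2 = (n : ℤ) by ring] at hr
        rw [show (n : ℤ) + 1 + 1 = (n : ℤ) + 2 by ring]
        rw [hr, hs, ih.1, ih.2, hf]
        simp only
        rw [hstep]
  obtain ⟨n, rfl⟩ := Int.eq_ofNat_of_zero_le (by linarith : (0 : ℤ) ≤ p)
  have hpf : h (n : ℤ) = A * y ^ (n : ℤ) + B * y ^ (-(n : ℤ)) := (key n).1
  set w : K := y ^ (2 * (n : ℤ)) with hw
  have hw8 : w * y + 1 - x * w - x * y = 0 := by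
    rw [zpow_add_one₀ hy0 (2 * (n : ℤ))] at h8
    exact h8
  have hI : A * (1 - x) * (1 + y) = y - x := by
    rw [hA]
    field_simp
    linear_combination (-(1 + y)) * h7
  -- y ≠ x
  have hyx : y - x ≠ 0 := by
    intro hxy
    have hx : x = y := (sub_eq_zero.mp hxy).symm
    rw [hx] at hw8
    exact hy2 (by linear_combination -hw8)
  have hAB : (A * w + B) * (y - x) = 0 := by
    linear_combination A * hw8 - hI + (y - x) * hB
  have hABw : A * w + B = 0 := by
    rcases mul_eq_zero.mp hAB with h' | h'
    · exact h'
    · exact absurd h' hyx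
  rw [hpf]
  have e1 : y ^ (n : ℤ) * y ^ (n : ℤ) = w := by
    rw [hw, ← zpow_add₀ hy0, two_mul]
  have e2 : y ^ (n : ℤ) * y ^ (-(n : ℤ)) = 1 := by
    rw [← zpow_add₀ hy0, add_neg_cancel, zpow_zero]
  linear_combination (y + 1) * (1 - x) * A * e1 + (y + 1) * (1 - x) * B * e2 +
    (y + 1) * (1 - x) * hABw
end

section
/- Define B : ℤ → F by B(p) = (m^2 + l)^(2p-1) * m^(2p) * h(p), using integer powers of the nonzero elements m^2 + l and m of the field F. Then B(p) = c*B(p-1) - d*B(p-2) for every integer p. -/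
noncomputable section
open MvPolynomial

/-- `F = ℚ(l, m)`, the field of rational functions in two variables over `ℚ`. -/
abbrev Fq : Type := FractionRing (MvPolynomial (Fin 2) ℚ)

/-- The variable `l` of `ℚ(l, m)`. -/
def lF : Fq := algebraMap (MvPolynomial (Fin 2) ℚ) Fq (X 0)

/-- The variable `m` of `ℚ(l, m)`. -/
def mF : Fq := algebraMap (MvPolynomial (Fin 2) ℚ) Fq (X 1)

/-- `x0 = (l m² + 1)/(m² + l)`. -/
def x0 : Fq := (lF * mF ^ 2 + 1) / (mF ^ 2 + lF)

/-- `a0 = m⁴ - x0 m⁴ + x0² m² + m² + 1 - x0`. -/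
def a0 : Fq := mF ^ 4 - x0 * mF ^ 4 + x0 ^ 2 * mF ^ 2 + mF ^ 2 + 1 - x0

/-- `b0 = m⁴ - x0 m² + 1`. -/
def b0 : Fq := mF ^ 4 - x0 * mF ^ 2 + 1

/-- The coefficient `c` of the Hoste–Shanahan recurrence. -/
def cF : Fq := -lF + lF ^ 2 + 2 * lF * mF ^ 2 + mF ^ 4 + 2 * lF * mF ^ 4 +
  lF ^ 2 * mF ^ 4 + 2 * lF * mF ^ 6 + mF ^ 8 - lF * mF ^ 8

/-- The coefficient `d = m⁴ (l + m²)⁴` of the Hoste–Shanahan recurrence. -/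
def dF : Fq := mF ^ 4 * (lF + mF ^ 2) ^ 4

lemma algmap_ne (q : MvPolynomial (Fin 2) ℚ) (hq : q ≠ 0) :
    algebraMap (MvPolynomial (Fin 2) ℚ) Fq q ≠ 0 := by
  simpa using (IsFractionRing.injective (MvPolynomial (Fin 2) ℚ) Fq).ne
    (a₁ := q) (a₂ := 0) hq

lemma mF_ne : mF ≠ 0 := by
  apply algmap_ne
  exact X_ne_zero 1

lemma u_ne : mF ^ 2 + lF ≠ 0 := by
  have : mF ^ 2 + lF = algebraMap (MvPolynomial (Fin 2) ℚ) Fq (X 1 ^ 2 + X 0) := by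
    simp [mF, lF, map_add, map_pow]
  rw [this]
  apply algmap_ne
  intro hq
  have := congrArg (eval fun i => if i = 0 then (1:ℚ) else 0) hq
  simp at this

set_option maxHeartbeats 1600000 in
/-- Recursive relation (12) from the proof of Theorem 2.2: with
`B(p) = (m² + l)^(2p-1) m^(2p) h(p)` (integer powers), `B` satisfies the
Hoste–Shanahan recurrence `B(p) = c B(p-1) - d B(p-2)` for every integer `p`. -/
theorem stmt_9 (h : ℤ → Fq) (h0 : h 0 = 1) (h1 : h 1 = b0 / mF ^ 2)
    (hrec : ∀ p : ℤ, h p = (a0 / mF ^ 2) * h (p - 1) - h (p - 2))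
    (B : ℤ → Fq)
    (hB : ∀ p : ℤ, B p = (mF ^ 2 + lF) ^ (2 * p - 1) * mF ^ (2 * p) * h p) :
    ∀ p : ℤ, B p = cF * B (p - 1) - dF * B (p - 2) := by
  intro p
  have hm := mF_ne
  have hu := u_ne
  rw [hB p, hB (p-1), hB (p-2), hrec p]
  have e1 : (mF ^ 2 + lF) ^ (2 * p - 1) = (mF ^ 2 + lF) ^ (2*p-5) * (mF ^ 2 + lF) ^ (4:ℤ) := by
    rw [← zpow_add₀ hu]; congr 1; ring
  have e2 : (mF ^ 2 + lF) ^ (2 * (p-1) - 1) = (mF ^ 2 + lF) ^ (2*p-5) * (mF ^ 2 + lF) ^ (2:ℤ) := by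
    rw [← zpow_add₀ hu]; congr 1; ring
  have e3 : (mF ^ 2 + lF) ^ (2 * (p-2) - 1) = (mF ^ 2 + lF) ^ (2*p-5) := by congr 1; ring
  have e4 : mF ^ (2 * p) = mF ^ (2*p-4) * mF ^ (4:ℤ) := by
    rw [← zpow_add₀ hm]; congr 1; ring
  have e5 : mF ^ (2 * (p-1)) = mF ^ (2*p-4) * mF ^ (2:ℤ) := by
    rw [← zpow_add₀ hm]; congr 1; ring
  have e6 : mF ^ (2 * (p-2)) = mF ^ (2*p-4) := by congr 1; ring
  rw [e1, e2, e3, e4, e5, e6]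
  generalize (mF ^ 2 + lF) ^ (2*p-5) = A
  generalize mF ^ (2*p-4) = C
  have z2 : ∀ x : Fq, x ^ (2:ℤ) = x ^ (2:ℕ) := fun x => zpow_ofNat x 2
  have z4 : ∀ x : Fq, x ^ (4:ℤ) = x ^ (4:ℕ) := fun x => zpow_ofNat x 4
  rw [z2, z2, z4, z4]
  unfold cF dF a0 x0
  field_simp [hm, hu]
  ring
end
end

section
/- For all natural numbers n, k, l with 1 ≤ n and l ≤ k ≤ n - 1, the following identity holds in ℚ(q): F(n+1, k, l)/F(n, k, l) = q^k * (1 - q^{-n-k-1})*(1 - q^{-n}) / ((1 - q^{-n-1})*(1 - q^{-n+k})). -/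
noncomputable section
open Finset

/-- The rational function field `ℚ(q)`. -/
abbrev Qq : Type := RatFunc ℚ

/-- The variable `q` of `ℚ(q)`. -/
def q : Qq := RatFunc.X

/-- `(q)_r = ∏_{j=1}^{r} (1 - q^j)`. -/
def qPoch (r : ℕ) : Qq := ∏ j ∈ Finset.Icc 1 r, (1 - q ^ j)

/-- `(q⁻¹)_r = ∏_{j=1}^{r} (1 - q^{-j})`. -/
def qInvPoch (r : ℕ) : Qq := ∏ j ∈ Finset.Icc 1 r, (1 - q ^ (-(j : ℤ)))

/-- The summand `F(n, k, l)` in the rearranged Masbaum formula for the colored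
Jones polynomial of the twist knot `K_p`. -/
def F (p : ℤ) (n k l : ℕ) : Qq :=
  (-1) ^ (k + 1) * q ^ (k * (k + 3) / 2) * q ^ (n * k) *
    ((qInvPoch (n + k) * qInvPoch (n - 1)) / (qInvPoch n * qInvPoch (n - k - 1))) *
    ((-1) ^ l * q ^ ((l : ℤ) * ((l : ℤ) + 1) * p + (l : ℤ) * ((l : ℤ) - 1) / 2) *
      (q ^ (2 * l + 1) - 1) * qPoch k / (qPoch (k + l + 1) * qPoch (k - l)))

/-! Only the factors `q^{nk}` and the four `(q⁻¹)`-Pochhammer symbols of `F(n, k, l)` depend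
on `n`; passing from `n` to `n + 1` multiplies `q^{nk}` by `q^k` and each Pochhammer symbol by
its next factor `1 - q^{-j}`, and the quotient of these new factors is the right-hand side. -/

lemma RatFunc.X_zpow_ne_one {K : Type*} [Field K] {m : ℤ} (hm : m ≠ 0) :
    (RatFunc.X : RatFunc K) ^ m ≠ 1 := by
  classical
  intro h
  have hval := RatFunc.inftyValuation.X_zpow K m
  rw [h, map_one] at hval
  exact hm (WithZero.exp_eq_one.mp hval.symm)

lemma one_sub_q_zpow_ne_zero {m : ℤ} (hm : m ≠ 0) : 1 - q ^ m ≠ 0 :=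
  sub_ne_zero.mpr (RatFunc.X_zpow_ne_one hm).symm

lemma qPoch_ne_zero (r : ℕ) : qPoch r ≠ 0 := by
  refine prod_ne_zero_iff.mpr fun j hj => ?_
  have hj : (j : ℤ) ≠ 0 := by have := (mem_Icc.mp hj).1; omega
  simpa using one_sub_q_zpow_ne_zero hj

lemma qInvPoch_ne_zero (r : ℕ) : qInvPoch r ≠ 0 := by
  refine prod_ne_zero_iff.mpr fun j hj => one_sub_q_zpow_ne_zero ?_
  have := (mem_Icc.mp hj).1
  omega

lemma qInvPoch_succ (r : ℕ) :
    qInvPoch (r + 1) = qInvPoch r * (1 - q ^ (-((r + 1 : ℕ) : ℤ))) :=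
  prod_Icc_succ_top (by omega) _

lemma F_ne_zero (p : ℤ) (n k l : ℕ) : F p n k l ≠ 0 := by
  have hq : q ≠ 0 := RatFunc.X_ne_zero
  have hodd : q ^ (2 * l + 1) - 1 ≠ 0 := by
    rw [← neg_ne_zero, neg_sub, ← zpow_natCast]
    exact one_sub_q_zpow_ne_zero (by omega)
  unfold F
  simp [hq, hodd, zpow_ne_zero _ hq, qPoch_ne_zero, qInvPoch_ne_zero]

lemma F_succ (p : ℤ) {n k : ℕ} (l : ℕ) (hkn : k < n) :
    F p (n + 1) k l = F p n k l * (q ^ k *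
      ((1 - q ^ (-((n + k + 1 : ℕ) : ℤ))) * (1 - q ^ (-(n : ℤ)))) /
        ((1 - q ^ (-((n + 1 : ℕ) : ℤ))) * (1 - q ^ (-((n - k : ℕ) : ℤ))))) := by
  obtain ⟨m, rfl⟩ : ∃ m, n = m + k + 1 := ⟨n - k - 1, by omega⟩
  have h₁ : m + k + 1 + 1 + k = (m + k + 1 + k) + 1 := by omega
  have h₂ : m + k + 1 + 1 - k - 1 = m + 1 := by omega
  have h₃ : m + k + 1 - k = m + 1 := by omega
  simp only [F, h₁, h₂, h₃, Nat.add_sub_cancel, qInvPoch_succ (m + k + 1 + k),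
    qInvPoch_succ (m + k + 1), qInvPoch_succ (m + k), qInvPoch_succ m]
  -- `ring` cannot split the inverse of a sum, so the new factors become atoms first.
  generalize 1 - q ^ (-((m + k + 1 + k + 1 : ℕ) : ℤ)) = a
  generalize 1 - q ^ (-((m + k + 1 + 1 : ℕ) : ℤ)) = b
  generalize 1 - q ^ (-((m + k + 1 : ℕ) : ℤ)) = c
  generalize 1 - q ^ (-((m + 1 : ℕ) : ℤ)) = d
  ring

theorem stmt_16_general (p : ℤ) (n k l : ℕ) (hn : 1 ≤ n) (hkn : k ≤ n - 1) :
    F p (n + 1) k l / F p n k l =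
      q ^ k * ((1 - q ^ (-(n : ℤ) - (k : ℤ) - 1)) * (1 - q ^ (-(n : ℤ)))) /
        ((1 - q ^ (-(n : ℤ) - 1)) * (1 - q ^ (-(n : ℤ) + (k : ℤ)))) := by
  rw [F_succ p l (by omega), mul_div_cancel_left₀ _ (F_ne_zero p n k l)]
  push_cast [Nat.cast_sub (by omega : k ≤ n)]
  ring_nf

/-- Equation (3) of the paper, defining `f₀`:
`F(n+1,k,l)/F(n,k,l) = q^k (1 - q^{-n-k-1})(1 - q^{-n}) / ((1 - q^{-n-1})(1 - q^{-n+k}))`. -/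
theorem stmt_16 (p : ℤ) (n k l : ℕ) (hn : 1 ≤ n) (hlk : l ≤ k) (hkn : k ≤ n - 1) :
    F p (n + 1) k l / F p n k l =
      q ^ k * ((1 - q ^ (-(n : ℤ) - (k : ℤ) - 1)) * (1 - q ^ (-(n : ℤ)))) /
        ((1 - q ^ (-(n : ℤ) - 1)) * (1 - q ^ (-(n : ℤ) + (k : ℤ)))) :=
  stmt_16_general p n k l hn hkn
end
end
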